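/- Let n ≥ 3 be an integer and let x, y ∈ V satisfy 1 < d(x,y) < 1 + 1/n. Then there exist x', y' ∈ V such that E n x x', E n y y', ¬ E 0 x' y', and A x' y'. (Abstract form of Lemma 5.10 of the paper: nearby to any pair at distance just above 1 there is a pair, agreeing with x and y on the n-th subsurface respectively, that disagree on S_0 and differ by an elementary move.) -/

import Mathlib

/-- `x` and `y` are related: equal, `E 0`-equivalent, or joined by an elementary move. -/
def Related {V : Type*} (E : ℕ → V → V → Prop) (A : V → V → Prop) (x y : V) : Prop :=
  x = y ∨ E 0 x y ∨ A x y

open Classical in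
/-- The partial distance `d̂` (given a total value on unrelated pairs, which is
never used): `d̂(x,y) = 0` if `x = y`; if `x ≠ y` and `E 0 x y`, then
`d̂(x,y) = 1/n` where `n` is the least (equivalently, for a separating refining
family, the unique) integer with `¬ E n x y` — so `E (n-1) x y` and `¬ E n x y`;
and `d̂(x,y) = 1` if `¬ E 0 x y`. -/
noncomputable def dhat {V : Type*} (E : ℕ → V → V → Prop) (x y : V) : ℝ :=
  if x = y then 0
  else if E 0 x y then ((sInf {n : ℕ | ¬ E n x y} : ℕ) : ℝ)⁻¹
  else 1

/-- `c` is a chain of length-parameter `ℓ` from `x` to `y`: consecutive terms are related. -/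
def IsChain' {V : Type*} (E : ℕ → V → V → Prop) (A : V → V → Prop)
    (x y : V) (ℓ : ℕ) (c : ℕ → V) : Prop :=
  c 0 = x ∧ c ℓ = y ∧ ∀ i < ℓ, Related E A (c i) (c (i + 1))

/-- The length of a chain: the sum of `d̂` over consecutive pairs. -/
noncomputable def chainLength {V : Type*} (E : ℕ → V → V → Prop)
    (ℓ : ℕ) (c : ℕ → V) : ℝ :=
  ∑ i ∈ Finset.range ℓ, dhat E (c i) (c (i + 1))

/-- The distance `d(x,y)`: the infimum of the lengths of all chains from `x` to `y`. -/
noncomputable def pdist {V : Type*} (E : ℕ → V → V → Prop) (A : V → V → Prop)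
    (x y : V) : ℝ :=
  sInf {L : ℝ | ∃ ℓ c, IsChain' E A x y ℓ c ∧ L = chainLength E ℓ c}

/-!
Take a chain from `x` to `y` of length `< 1 + 1/n`. Not all of its steps can be `E 0`-steps,
for then `E 0 x y` and `d(x,y) ≤ d̂(x,y) ≤ 1`. A step that is not an `E 0`-step costs `1`,
so every other step costs `< 1/n` and is therefore an `E n`-step. The offending step is an
elementary move, and its endpoints are `E n`-equivalent to `x` and `y` by transitivity.
-/

theorem rel_of_forall_rel_succ_of_le {α : Type*} {r : α → α → Prop}
    [Std.Refl r] [IsTrans α r] {c : ℕ → α} {a b : ℕ} (hab : a ≤ b)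
    (h : ∀ i, a ≤ i → i < b → r (c i) (c (i + 1))) : r (c a) (c b) := by
  induction b, hab using Nat.le_induction with
  | base => exact refl _
  | succ b hab ih =>
    exact _root_.trans (ih fun i hai hib => h i hai (hib.trans b.lt_succ_self))
      (h b hab b.lt_succ_self)

section Distance

variable {V : Type*} {E : ℕ → V → V → Prop} {A : V → V → Prop}

theorem Related.move_of_not_rel (hrefl : ∀ x, E 0 x x) {x y : V} (h : Related E A x y)
    (h0 : ¬ E 0 x y) : A x y := by
  rcases h with rfl | hE | hA
  · exact absurd (hrefl x) h0
  · exact absurd hE h0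
  · exact hA

theorem dhat_nonneg (x y : V) : 0 ≤ dhat E x y := by
  unfold dhat
  split_ifs <;> positivity

theorem dhat_le_one (x y : V) : dhat E x y ≤ 1 := by
  unfold dhat
  split_ifs
  · exact zero_le_one
  · exact Nat.cast_inv_le_one _
  · exact le_rfl

theorem dhat_eq_one_of_not_rel (hrefl : ∀ x, E 0 x x) {x y : V} (h : ¬ E 0 x y) :
    dhat E x y = 1 := by
  have hxy : x ≠ y := by rintro rfl; exact h (hrefl x)
  simp only [dhat, if_neg hxy, if_neg h]

theorem rel_of_dhat_lt_inv {n : ℕ} (hrefl : ∀ x, E n x x) {x y : V}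
    (hd : dhat E x y < (n : ℝ)⁻¹) : E n x y := by
  unfold dhat at hd
  split_ifs at hd with hxy h0
  · exact hxy ▸ hrefl x
  · by_contra hn
    set m := sInf {k : ℕ | ¬ E k x y}
    have hm_le : m ≤ n := Nat.sInf_le hn
    have hm_pos : 0 < m := Nat.pos_of_ne_zero fun hm =>
      Nat.sInf_mem (s := {k | ¬ E k x y}) ⟨n, hn⟩ (by rwa [← hm] at h0)
    have : (n : ℝ)⁻¹ ≤ (m : ℝ)⁻¹ :=
      inv_anti₀ (by exact_mod_cast hm_pos) (by exact_mod_cast hm_le)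
    linarith
  · linarith [Nat.cast_inv_le_one (α := ℝ) n]

theorem dhat_add_dhat_le_chainLength {ℓ i j : ℕ} (c : ℕ → V) (hi : i < ℓ) (hj : j < ℓ)
    (hij : i ≠ j) :
    dhat E (c i) (c (i + 1)) + dhat E (c j) (c (j + 1)) ≤ chainLength E ℓ c := by
  rw [← Finset.sum_pair (f := fun k => dhat E (c k) (c (k + 1))) hij]
  refine Finset.sum_le_sum_of_subset_of_nonneg ?_ fun _ _ _ => dhat_nonneg _ _
  simp [Finset.insert_subset_iff, hi, hj]

theorem pdist_le_chainLength {x y : V} {ℓ : ℕ} {c : ℕ → V} (hc : IsChain' E A x y ℓ c) :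
    pdist E A x y ≤ chainLength E ℓ c := by
  refine csInf_le ⟨0, ?_⟩ ⟨ℓ, c, hc, rfl⟩
  rintro _ ⟨ℓ, c, -, rfl⟩
  exact Finset.sum_nonneg fun _ _ => dhat_nonneg _ _

theorem pdist_le_dhat {x y : V} (h : Related E A x y) : pdist E A x y ≤ dhat E x y := by
  have hc : IsChain' E A x y 1 fun i => if i = 0 then x else y :=
    ⟨rfl, rfl, fun i hi => by simpa [Nat.lt_one_iff.mp hi] using h⟩
  simpa [chainLength] using pdist_le_chainLength hc

theorem pdist_le_one_of_rel {x y : V} (h : E 0 x y) : pdist E A x y ≤ 1 :=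
  (pdist_le_dhat (Or.inr (Or.inl h))).trans (dhat_le_one x y)

theorem exists_chainLength_lt_of_pdist_lt {x y : V} {r : ℝ} (hpos : 0 < pdist E A x y)
    (h : pdist E A x y < r) : ∃ ℓ c, IsChain' E A x y ℓ c ∧ chainLength E ℓ c < r := by
  have hne : {L | ∃ ℓ c, IsChain' E A x y ℓ c ∧ L = chainLength E ℓ c}.Nonempty := by
    by_contra hempty
    rw [Set.not_nonempty_iff_eq_empty] at hempty
    -- `sInf ∅ = 0` in `ℝ`
    simp [pdist, hempty] at hpos
  obtain ⟨_, ⟨ℓ, c, hc, rfl⟩, hlt⟩ := exists_lt_of_csInf_lt hne h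
  exact ⟨ℓ, c, hc, hlt⟩

end Distance

theorem exists_close_elementary_pair_general (V : Type*) (E : ℕ → V → V → Prop)
    (A : V → V → Prop)
    (hEquiv : ∀ n, Equivalence (E n))
    (n : ℕ) (x y : V)
    (h1 : 1 < pdist E A x y) (h2 : pdist E A x y < 1 + 1 / (n : ℝ)) :
    ∃ x' y' : V, E n x x' ∧ E n y y' ∧ ¬ E 0 x' y' ∧ A x' y' := by
  have (m : ℕ) : Std.Refl (E m) := ⟨(hEquiv m).refl⟩
  have (m : ℕ) : IsTrans V (E m) := ⟨fun _ _ _ => (hEquiv m).trans⟩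
  obtain ⟨ℓ, c, ⟨rfl, rfl, hstep⟩, hlen⟩ :=
    exists_chainLength_lt_of_pdist_lt (by linarith) h2
  obtain ⟨j, hj, hjump⟩ : ∃ j < ℓ, ¬ E 0 (c j) (c (j + 1)) := by
    by_contra! hall
    have := pdist_le_one_of_rel (A := A)
      (rel_of_forall_rel_succ_of_le ℓ.zero_le fun i _ hi => hall i hi)
    linarith
  have hclose : ∀ i < ℓ, i ≠ j → E n (c i) (c (i + 1)) := fun i hi hij => by
    refine rel_of_dhat_lt_inv (hEquiv n).refl ?_
    have := dhat_add_dhat_le_chainLength (E := E) c hi hj hij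
    rw [dhat_eq_one_of_not_rel (hEquiv 0).refl hjump] at this
    rw [one_div] at hlen
    linarith
  refine ⟨c j, c (j + 1), ?_, ?_, hjump, (hstep j hj).move_of_not_rel (hEquiv 0).refl hjump⟩
  · exact rel_of_forall_rel_succ_of_le j.zero_le
      fun i _ hi => hclose i (hi.trans hj) hi.ne
  · exact (hEquiv n).symm <| rel_of_forall_rel_succ_of_le hj
      fun i hji hi => hclose i hi (by omega)

/-- Abstract form of Lemma 5.10: for `n ≥ 3` and `x, y ∈ V` with
`1 < d(x,y) < 1 + 1/n`, there exist `x', y'` with `E n x x'`, `E n y y'`,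
`¬ E 0 x' y'`, and `A x' y'` (they differ by an elementary move). -/
theorem exists_close_elementary_pair (V : Type*) (E : ℕ → V → V → Prop)
    (A : V → V → Prop)
    (hEquiv : ∀ n, Equivalence (E n))
    (hRefine : ∀ n x y, E (n + 1) x y → E n x y)
    (hSep : ∀ x y : V, x ≠ y → ∃ n : ℕ, ¬ E n x y)
    (hAsymm : ∀ x y : V, A x y → A y x)
    (hAirrefl : ∀ x : V, ¬ A x x)
    (hChain : ∀ x y : V, ∃ z : V, E 0 x z ∧ ∃ ℓ c, IsChain' E A z y ℓ c)
    (n : ℕ) (hn : 3 ≤ n) (x y : V)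
    (h1 : 1 < pdist E A x y) (h2 : pdist E A x y < 1 + 1 / (n : ℝ)) :
    ∃ x' y' : V, E n x x' ∧ E n y y' ∧ ¬ E 0 x' y' ∧ A x' y' :=
  exists_close_elementary_pair_general V E A hEquiv n x y h1 h2
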